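/- arXiv:2111.15061 — 3 statements merged into one kernel-verified Lean document; each statement's English description precedes it below -/
import Mathlib

section
/- For any nonnegative integrable function f on [-δ,δ] (δ>0), the cube of the integral of f is bounded by a universal constant times the squared L² norm of f times the weighted integral ∫ |r| f(r) dr; that is, (∫_{-δ}^{δ} f(r) dr)³ ≤ C · (∫_{-δ}^{δ} f(r)² dr) · (∫_{-δ}^{δ} |r| f(r) dr) for some absolute constant C. -/
/-!
Split at a scale `ε`: near the origin, `f ≤ f² / (2c) + c / 2` (AM-GM) on a set of length `2ε`,
and away from it `f ≤ |x| f / ε`. Hence `∫ f ≤ A / (2c) + c ε + B / ε` for all `c, ε > 0`,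
where `A = ∫ f²` and `B = ∫ |x| f`; choosing `c = 3A / (2I)` and `ε = 3B / I` with `I = ∫ f`
gives `I³ ≤ 27/2 · A B`.
-/

open MeasureTheory Set Filter Topology

lemma pow_three_le_of_forall_le_div_add_mul_add_div_of_pos {I A B : ℝ} (hA : 0 < A) (hB : 0 < B)
    (h : ∀ c ε : ℝ, 0 < c → 0 < ε → I ≤ A / (2 * c) + c * ε + B / ε) :
    I ^ 3 ≤ 27 / 2 * A * B := by
  rcases le_or_gt I 0 with hI | hI
  · nlinarith [pow_two_nonneg I, mul_pos hA hB]
  have key := h (3 * A / (2 * I)) (3 * B / I) (by positivity) (by positivity)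
  have hAc : A / (2 * (3 * A / (2 * I))) = I / 3 := by field_simp
  have hBε : B / (3 * B / I) = I / 3 := by field_simp
  have hcε : 3 * A / (2 * I) * (3 * B / I) = 27 / 2 * A * B / (3 * I ^ 2) := by field_simp; ring
  rw [hAc, hBε, hcε] at key
  have : I / 3 ≤ 27 / 2 * A * B / (3 * I ^ 2) := by linarith
  rwa [le_div_iff₀ (by positivity), show I / 3 * (3 * I ^ 2) = I ^ 3 by ring] at this

lemma pow_three_le_of_forall_le_div_add_mul_add_div {I A B : ℝ} (hA : 0 ≤ A) (hB : 0 ≤ B)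
    (h : ∀ c ε : ℝ, 0 < c → 0 < ε → I ≤ A / (2 * c) + c * ε + B / ε) :
    I ^ 3 ≤ 27 / 2 * A * B := by
  have hlim : Tendsto (fun η => 27 / 2 * (A + η) * (B + η)) (𝓝[>] 0) (𝓝 (27 / 2 * A * B)) := by
    have : Continuous fun η : ℝ => 27 / 2 * (A + η) * (B + η) := by fun_prop
    simpa using (this.tendsto 0).mono_left nhdsWithin_le_nhds
  refine ge_of_tendsto hlim (eventually_nhdsWithin_of_forall fun η (hη : 0 < η) => ?_)
  refine pow_three_le_of_forall_le_div_add_mul_add_div_of_pos (by linarith) (by linarith)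
    fun c ε hc hε => (h c ε hc hε).trans ?_
  gcongr <;> linarith

lemma le_sq_div_add_indicator_add_abs_mul_div {c ε x y : ℝ} (hc : 0 < c) (hε : 0 < ε)
    (hy : 0 ≤ y) :
    y ≤ y ^ 2 / (2 * c) + (Icc (-ε) ε).indicator (fun _ => c / 2) x + |x| * y / ε := by
  have hy2 : 0 ≤ y ^ 2 / (2 * c) := by positivity
  have hxy : 0 ≤ |x| * y / ε := by positivity
  by_cases hx : x ∈ Icc (-ε) ε
  · rw [indicator_of_mem hx]
    have : y ≤ y ^ 2 / (2 * c) + c / 2 := by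
      rw [div_add' _ _ _ (by positivity), le_div_iff₀ (by positivity)]
      nlinarith [sq_nonneg (y - c)]
    linarith
  · rw [indicator_of_notMem hx]
    have hεx : ε ≤ |x| := by
      by_contra! hlt
      exact hx (abs_le.1 hlt.le)
    have : y ≤ |x| * y / ε := by
      rw [le_div_iff₀ hε]
      nlinarith
    linarith

theorem setIntegral_le_div_add_mul_add_div {s : Set ℝ} (hs : MeasurableSet s) {f : ℝ → ℝ}
    (hf0 : ∀ x ∈ s, 0 ≤ f x) (hf : IntegrableOn f s) (hf2 : IntegrableOn (fun x => f x ^ 2) s)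
    (hxf : IntegrableOn (fun x => |x| * f x) s) {c ε : ℝ} (hc : 0 < c) (hε : 0 < ε) :
    ∫ x in s, f x ≤
      (∫ x in s, f x ^ 2) / (2 * c) + c * ε + (∫ x in s, |x| * f x) / ε := by
  have hsq : IntegrableOn (fun x => f x ^ 2 / (2 * c)) s := hf2.div_const _
  have hind : IntegrableOn (fun x => (Icc (-ε) ε).indicator (fun _ => c / 2) x) s :=
    ((integrable_indicator_iff measurableSet_Icc).2 (integrableOn_const (by simp))).integrableOn
  have hlin : IntegrableOn (fun x => |x| * f x / ε) s := hxf.div_const _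
  have hsq_ind : IntegrableOn
      (fun x => f x ^ 2 / (2 * c) + (Icc (-ε) ε).indicator (fun _ => c / 2) x) s :=
    hsq.add hind
  have hind_le : ∫ x in s, (Icc (-ε) ε).indicator (fun _ => c / 2) x ≤ c * ε := by
    rw [integral_indicator_const _ measurableSet_Icc, measureReal_restrict_apply measurableSet_Icc,
      smul_eq_mul]
    calc volume.real (Icc (-ε) ε ∩ s) * (c / 2) ≤ volume.real (Icc (-ε) ε) * (c / 2) := by
          gcongr
          exacts [by simp, inter_subset_left]
      _ = c * ε := by rw [Real.volume_real_Icc_of_le (by linarith)]; ring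
  calc ∫ x in s, f x
      ≤ ∫ x in s, (f x ^ 2 / (2 * c) + (Icc (-ε) ε).indicator (fun _ => c / 2) x
          + |x| * f x / ε) :=
        setIntegral_mono_on hf (hsq_ind.add hlin) hs
          fun x hx => le_sq_div_add_indicator_add_abs_mul_div hc hε (hf0 x hx)
    _ ≤ (∫ x in s, f x ^ 2) / (2 * c) + c * ε + (∫ x in s, |x| * f x) / ε := by
        rw [integral_add hsq_ind hlin, integral_add hsq hind, integral_div, integral_div]
        linarith

/-- For any nonnegative integrable `f` on `[-δ,δ]`,
`(∫ f)³ ≤ C · (∫ f²) · (∫ |r| f(r) dr)` for an absolute constant `C`. -/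
theorem stmt_0 :
    ∃ C > (0:ℝ), ∀ (δ : ℝ), 0 < δ → ∀ f : ℝ → ℝ,
      (∀ x ∈ Set.Icc (-δ) δ, 0 ≤ f x) →
      IntegrableOn f (Set.Icc (-δ) δ) volume →
      IntegrableOn (fun x => (f x) ^ 2) (Set.Icc (-δ) δ) volume →
      (∫ x in Set.Icc (-δ) δ, f x) ^ 3 ≤
        C * (∫ x in Set.Icc (-δ) δ, (f x) ^ 2) *
          (∫ x in Set.Icc (-δ) δ, |x| * f x) := by
  refine ⟨27 / 2, by norm_num, fun δ _ f hf0 hf hf2 => ?_⟩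
  have hxf : IntegrableOn (fun x => |x| * f x) (Icc (-δ) δ) :=
    hf.continuousOn_mul continuous_abs.continuousOn isCompact_Icc
  refine pow_three_le_of_forall_le_div_add_mul_add_div
    (setIntegral_nonneg measurableSet_Icc fun x _ => sq_nonneg _)
    (setIntegral_nonneg measurableSet_Icc fun x hx => mul_nonneg (abs_nonneg x) (hf0 x hx))
    fun c ε hc hε => setIntegral_le_div_add_mul_add_div measurableSet_Icc hf0 hf hf2 hxf hc hε
end

section
/- For nonnegative integrable f on [0,δ], one has ‖f‖_{L¹(0,δ)}⁴ ≤ C ‖f‖_{L²(0,δ)}² ‖f‖_{L¹(0,δ)} ∫₀^δ r f(r) dr for an absolute constant C. (This follows by symmetrizing the fourfold product integral over the region {x₁+x₂ ≤ y₁+y₂} and applying Cauchy–Schwarz.) -/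
/-!
Split `∫ f` at a threshold `t`. On `[0, t]`, Cauchy–Schwarz bounds the mass by `√(t ∫ f²)`; beyond
`t`, the mass is at most `(∫ x f) / t`. Taking `t = (∫ f)² / (4 ∫ f²)` makes the first part at
most half of `∫ f`, so the second part is at least half, which gives `(∫ f)³ ≤ 8 ∫ f² ∫ x f`.
-/

open MeasureTheory Set

theorem sq_integral_le_measureReal_mul_integral_sq {α : Type*} [MeasurableSpace α]
    {μ : Measure α} [IsFiniteMeasure μ] {f : α → ℝ} (hf : Integrable f μ)
    (hf2 : Integrable (fun x => f x ^ 2) μ) :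
    (∫ x, f x ∂μ) ^ 2 ≤ μ.real univ * ∫ x, f x ^ 2 ∂μ := by
  set I := ∫ x, f x ∂μ
  set m := μ.real univ
  rcases measureReal_nonneg.eq_or_lt with hm | hm
  · have hμ : μ = 0 := Measure.measure_univ_eq_zero.1 ((measureReal_eq_zero_iff).1 hm.symm)
    simp [I, hμ]
  have expand : ∫ x, (m * f x - I) ^ 2 ∂μ = m * (m * ∫ x, f x ^ 2 ∂μ - I ^ 2) := by
    have h : ∀ x, (m * f x - I) ^ 2 = m ^ 2 * f x ^ 2 - 2 * m * I * f x + I ^ 2 :=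
      fun x => by ring
    have hsq : Integrable (fun x => m ^ 2 * f x ^ 2) μ := hf2.const_mul _
    have hlin : Integrable (fun x => 2 * m * I * f x) μ := hf.const_mul _
    have hdiff : Integrable (fun x => m ^ 2 * f x ^ 2 - 2 * m * I * f x) μ := hsq.sub hlin
    simp_rw [h]
    rw [integral_add hdiff (integrable_const _), integral_sub hsq hlin,
      integral_const_mul, integral_const_mul, integral_const, smul_eq_mul]
    ring
  have key : 0 ≤ m * (m * ∫ x, f x ^ 2 ∂μ - I ^ 2) :=
    expand ▸ integral_nonneg fun x => sq_nonneg _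
  nlinarith [(mul_nonneg_iff_of_pos_left hm).1 key]

section Threshold

variable {s : Set ℝ} {f : ℝ → ℝ}

theorem sq_setIntegral_inter_Iic_le (hs : MeasurableSet s) (hs0 : s ⊆ Ici 0) {t : ℝ} (ht : 0 ≤ t)
    (hf : IntegrableOn f s) (hf2 : IntegrableOn (fun x => f x ^ 2) s) :
    (∫ x in s ∩ Iic t, f x) ^ 2 ≤ t * ∫ x in s, f x ^ 2 := by
  have hsub : s ∩ Iic t ⊆ Icc 0 t := fun x hx => ⟨hs0 hx.1, hx.2⟩
  have hIcc : volume (Icc 0 t) ≠ ⊤ := measure_Icc_lt_top.ne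
  have := isFiniteMeasure_restrict.2 (measure_ne_top_of_subset hsub hIcc)
  have hvol : volume.real (s ∩ Iic t) ≤ t := by
    simpa [Real.volume_real_Icc_of_le ht] using measureReal_mono hsub hIcc
  have hmono : ∫ x in s ∩ Iic t, f x ^ 2 ≤ ∫ x in s, f x ^ 2 :=
    setIntegral_mono_set hf2 (ae_of_all _ fun x => sq_nonneg (f x))
      (ae_of_all _ inter_subset_left)
  calc (∫ x in s ∩ Iic t, f x) ^ 2
      ≤ volume.real (s ∩ Iic t) * ∫ x in s ∩ Iic t, f x ^ 2 := by
        simpa using sq_integral_le_measureReal_mul_integral_sq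
          (hf.mono_set inter_subset_left) (hf2.mono_set inter_subset_left)
    _ ≤ t * ∫ x in s, f x ^ 2 :=
        mul_le_mul hvol hmono (setIntegral_nonneg (hs.inter measurableSet_Iic)
          fun x _ => sq_nonneg _) (measureReal_nonneg.trans hvol)

theorem mul_setIntegral_sdiff_Iic_le (hs : MeasurableSet s) (hs0 : s ⊆ Ici 0)
    (hf0 : ∀ x ∈ s, 0 ≤ f x) (hf : IntegrableOn f s) (hxf : IntegrableOn (fun x => x * f x) s)
    (t : ℝ) :
    t * ∫ x in s \ Iic t, f x ≤ ∫ x in s, x * f x := by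
  have hmeas : MeasurableSet (s \ Iic t) := hs.diff measurableSet_Iic
  calc t * ∫ x in s \ Iic t, f x = ∫ x in s \ Iic t, t * f x := (integral_const_mul _ _).symm
    _ ≤ ∫ x in s \ Iic t, x * f x :=
        setIntegral_mono_on ((hf.mono_set sdiff_subset).const_mul _) (hxf.mono_set sdiff_subset)
          hmeas fun x hx => mul_le_mul_of_nonneg_right (not_le.1 hx.2).le (hf0 x hx.1)
    _ ≤ ∫ x in s, x * f x :=
        setIntegral_mono_set hxf
          ((ae_restrict_iff' hs).2 (ae_of_all _ fun x hx => mul_nonneg (hs0 hx) (hf0 x hx)))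
          (ae_of_all _ sdiff_subset)

theorem setIntegral_pow_three_le (hs : MeasurableSet s) (hs0 : s ⊆ Ici 0)
    (hf0 : ∀ x ∈ s, 0 ≤ f x) (hf : IntegrableOn f s) (hf2 : IntegrableOn (fun x => f x ^ 2) s)
    (hxf : IntegrableOn (fun x => x * f x) s) :
    (∫ x in s, f x) ^ 3 ≤ 8 * (∫ x in s, f x ^ 2) * ∫ x in s, x * f x := by
  set I := ∫ x in s, f x
  set S := ∫ x in s, f x ^ 2
  set M := ∫ x in s, x * f x
  have hI : 0 ≤ I := setIntegral_nonneg hs hf0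
  rcases (setIntegral_nonneg hs fun x _ => sq_nonneg (f x)).eq_or_lt with hS | hS
  · have hf_ae : f =ᵐ[volume.restrict s] 0 :=
      ((integral_eq_zero_iff_of_nonneg (fun x => sq_nonneg (f x)) hf2).1 hS.symm).mono
        fun x hx => by simpa using hx
    rw [show I = 0 from integral_eq_zero_of_ae hf_ae, show S = 0 from hS.symm]
    simp
  have hS0 : S ≠ 0 := hS.ne'
  set t := I ^ 2 / (4 * S)
  have ht : 0 ≤ t := by positivity
  have htS : t * S = (I / 2) ^ 2 := by simp only [t]; field_simp; ring
  set A := ∫ x in s ∩ Iic t, f x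
  set B := ∫ x in s \ Iic t, f x
  have hAB : A + B = I := integral_inter_add_sdiff measurableSet_Iic hf
  have hA : A ≤ I / 2 :=
    abs_le_of_sq_le_sq' (htS ▸ sq_setIntegral_inter_Iic_le hs hs0 ht hf hf2) (by positivity) |>.2
  have hB : t * B ≤ M := mul_setIntegral_sdiff_Iic_le hs hs0 hf0 hf hxf t
  have htI : t * I ≤ 2 * M := by nlinarith
  calc I ^ 3 = 8 * S * (t * I / 2) := by simp only [t]; field_simp; ring
    _ ≤ 8 * S * M := by gcongr; linarith

end Threshold

/-- For nonnegative integrable `f` on `[0,δ]`: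
`‖f‖_{L¹}⁴ ≤ C ‖f‖_{L²}² ‖f‖_{L¹} ∫₀^δ r f(r) dr` for an absolute constant `C`. -/
theorem stmt_1 :
    ∃ C > (0:ℝ), ∀ (δ : ℝ), 0 < δ → ∀ f : ℝ → ℝ,
      (∀ x ∈ Set.Icc (0:ℝ) δ, 0 ≤ f x) →
      IntegrableOn f (Set.Icc (0:ℝ) δ) volume →
      IntegrableOn (fun x => (f x) ^ 2) (Set.Icc (0:ℝ) δ) volume →
      (∫ x in Set.Icc (0:ℝ) δ, f x) ^ 4 ≤
        C * (∫ x in Set.Icc (0:ℝ) δ, (f x) ^ 2) *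
          (∫ x in Set.Icc (0:ℝ) δ, f x) *
          (∫ x in Set.Icc (0:ℝ) δ, x * f x) := by
  refine ⟨8, by norm_num, fun δ _ f hf0 hf hf2 => ?_⟩
  have hxf : IntegrableOn (fun x => x * f x) (Icc 0 δ) :=
    hf.continuousOn_mul continuousOn_id isCompact_Icc
  have hI : 0 ≤ ∫ x in Icc 0 δ, f x := setIntegral_nonneg measurableSet_Icc hf0
  have hcube := setIntegral_pow_three_le measurableSet_Icc (fun x hx => hx.1) hf0 hf hf2 hxf
  calc (∫ x in Icc 0 δ, f x) ^ 4 = (∫ x in Icc 0 δ, f x) * (∫ x in Icc 0 δ, f x) ^ 3 := by ring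
    _ ≤ (∫ x in Icc 0 δ, f x) * (8 * (∫ x in Icc 0 δ, f x ^ 2) * ∫ x in Icc 0 δ, x * f x) :=
        mul_le_mul_of_nonneg_left hcube hI
    _ = _ := by ring
end

section
/- The function φ(x) = exp(1/(x²-1) + 1) for |x| < 1 (extended by 0 for |x| ≥ 1) satisfies 1 - 4x² ≤ φ(x) ≤ 1 - x²/2 for all x with |x| ≤ 1/2. -/
/-! With `u = x²/(1 - x²)` one has `φ(x) = exp(-u)` on `|x| < 1`, and `1 - u ≤ exp(-u) ≤ 1/(1 + u)`.
Here `1/(1 + u) = 1 - x²`, while `u ≤ 4x²` once `x² ≤ 1/4`. -/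

/-- The cut-off profile `φ(x) = exp(1/(x²-1)+1)` for `|x| < 1`, extended by `0`. -/
noncomputable def phiProfile (x : ℝ) : ℝ :=
  if |x| < 1 then Real.exp (1 / (x ^ 2 - 1) + 1) else 0

open Real

lemma Real.exp_neg_le_inv_add_one {u : ℝ} (hu : -1 < u) : exp (-u) ≤ (u + 1)⁻¹ := by
  rw [exp_neg]
  exact inv_anti₀ (by linarith) (add_one_le_exp u)

lemma phiProfile_eq_exp_neg {x : ℝ} (hx : |x| < 1) :
    phiProfile x = exp (-(x ^ 2 / (1 - x ^ 2))) := by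
  have hx2 : 1 - x ^ 2 ≠ 0 := (sub_pos.mpr ((sq_lt_one_iff_abs_lt_one x).2 hx)).ne'
  rw [phiProfile, if_pos hx, ← neg_sub, one_div_neg_eq_neg_one_div]
  congr 1
  field_simp
  ring

lemma one_sub_sq_div_le_phiProfile {x : ℝ} (hx : |x| < 1) :
    1 - x ^ 2 / (1 - x ^ 2) ≤ phiProfile x :=
  phiProfile_eq_exp_neg hx ▸ one_sub_le_exp_neg _

lemma phiProfile_le_one_sub_sq {x : ℝ} (hx : |x| < 1) : phiProfile x ≤ 1 - x ^ 2 := by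
  have hpos : 0 < 1 - x ^ 2 := sub_pos.mpr ((sq_lt_one_iff_abs_lt_one x).2 hx)
  have hinv : (x ^ 2 / (1 - x ^ 2) + 1)⁻¹ = 1 - x ^ 2 := by
    field_simp
    ring
  calc phiProfile x = exp (-(x ^ 2 / (1 - x ^ 2))) := phiProfile_eq_exp_neg hx
    _ ≤ (x ^ 2 / (1 - x ^ 2) + 1)⁻¹ :=
      exp_neg_le_inv_add_one (by linarith [div_nonneg (sq_nonneg x) hpos.le])
    _ = 1 - x ^ 2 := hinv

/-- `1 - 4x² ≤ φ(x) ≤ 1 - x²/2` for all `|x| ≤ 1/2`. -/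
theorem stmt_2 :
    ∀ x : ℝ, |x| ≤ 1 / 2 →
      1 - 4 * x ^ 2 ≤ phiProfile x ∧ phiProfile x ≤ 1 - x ^ 2 / 2 := by
  intro x hx
  have hx1 : |x| < 1 := hx.trans_lt (by norm_num)
  have hx2 : x ^ 2 ≤ 1 / 4 := by
    rw [← sq_abs]
    nlinarith [abs_nonneg x]
  have hu : x ^ 2 / (1 - x ^ 2) ≤ 4 * x ^ 2 := by
    rw [div_le_iff₀ (by linarith)]
    nlinarith [sq_nonneg x]
  constructor
  · linarith [one_sub_sq_div_le_phiProfile hx1]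
  · linarith [phiProfile_le_one_sub_sq hx1, sq_nonneg x]
end
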